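/- Let p ∈ [0,1] with p ≠ 1/2. Let X and Y be real random variables on a probability space such that X ~ Bernoulli(p), Y is independent of X, Y is square-integrable, and X + Y is symmetric about 0. Then E[Y²] ≥ p. -/

import Mathlib

/-!
Since `X + Y` is symmetric, every odd function of it has mean zero. Taking the identity gives
`E[Y] = -p`. For `sin (π ·)`: as `X ∈ {0, 1}`, `sin (π (X + Y)) = (1 - 2X) sin (π Y)`, so
independence gives `(1 - 2p) E[sin (π Y)] = 0`, hence `E[sin (π Y)] = 0` because `p ≠ 1/2`. The pointwise bound `sin (π y) ≤ π (y² + y)` then yields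
`0 ≤ E[Y²] + E[Y] = E[Y²] - p`.
-/

open MeasureTheory ProbabilityTheory Real

namespace Real

theorem sin_pi_mul_le (y : ℝ) : sin (π * y) ≤ π * (y ^ 2 + y) := by
  -- both sides are invariant under `y ↦ -1 - y`
  wlog hy : -1 / 2 ≤ y generalizing y
  · have hsin : sin (π * (-1 - y)) = sin (π * y) := by
      rw [show π * (-1 - y) = -(π * y + π) by ring, sin_neg, sin_add_pi, neg_neg]
    have h := this (-1 - y) (by linarith)
    rw [hsin] at h
    linarith
  rcases le_total 0 y with hy0 | hy0
  · nlinarith [sin_le (mul_nonneg pi_pos.le hy0), pi_pos, sq_nonneg y]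
  · have hcube := sin_ge_sub_cube (x := -(π * y)) (by nlinarith [pi_pos])
    rw [sin_neg] at hcube
    have hpi_sq : π ^ 2 ≤ 12 := by nlinarith [pi_lt_d2, pi_pos]
    -- `x - x³/6 ≥ x - x²/π` for `0 ≤ x = -π y ≤ π/2`, as `π² ≤ 12`
    nlinarith [mul_nonneg (mul_nonneg pi_pos.le (sq_nonneg y)) (by nlinarith : 0 ≤ 6 + π ^ 2 * y)]

end Real

section Symmetric

variable {Ω E : Type*} [MeasurableSpace Ω] [NormedAddCommGroup E] [NormedSpace ℝ E]
  {μ : Measure Ω} {Z : Ω → ℝ}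

theorem integral_comp_eq_zero_of_map_eq_map_neg (hZ : AEMeasurable Z μ)
    (hsymm : μ.map Z = μ.map (fun ω => -Z ω)) {f : ℝ → E} (hf : StronglyMeasurable f)
    (hodd : ∀ z, f (-z) = -f z) : ∫ ω, f (Z ω) ∂μ = 0 := by
  have := IsAddTorsionFree.of_isTorsionFree ℝ E
  rw [← self_eq_neg]
  calc ∫ ω, f (Z ω) ∂μ = ∫ z, f z ∂(μ.map Z) := (integral_map hZ hf.aestronglyMeasurable).symm
    _ = ∫ z, f z ∂(μ.map fun ω => -Z ω) := by rw [hsymm]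
    _ = ∫ ω, f (-Z ω) ∂μ := integral_map hZ.neg hf.aestronglyMeasurable
    _ = -∫ ω, f (Z ω) ∂μ := by simp_rw [hodd]; exact integral_neg _

end Symmetric

section ZeroOne

variable {Ω : Type*} [MeasurableSpace Ω] {μ : Measure Ω} {X : Ω → ℝ}

theorem ae_eq_zero_or_eq_one_of_measure_eq [IsProbabilityMeasure μ] (hXm : Measurable X)
    {p : ℝ} (hp : p ∈ Set.Icc (0 : ℝ) 1) (hX1 : μ {ω | X ω = 1} = ENNReal.ofReal p)
    (hX0 : μ {ω | X ω = 0} = ENNReal.ofReal (1 - p)) : ∀ᵐ ω ∂μ, X ω = 0 ∨ X ω = 1 := by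
  have hdisj : Disjoint {ω | X ω = 0} {ω | X ω = 1} :=
    Set.disjoint_left.2 fun ω h0 h1 => zero_ne_one (h0.symm.trans h1)
  have hunion : μ ({ω | X ω = 0} ∪ {ω | X ω = 1}) = 1 := by
    rw [measure_union hdisj (hXm (measurableSet_singleton 1)), hX0, hX1,
      ← ENNReal.ofReal_add (by linarith [hp.2]) hp.1]
    simp
  exact (prob_compl_eq_zero_iff ((hXm (measurableSet_singleton 0)).union
    (hXm (measurableSet_singleton 1)))).2 hunion

theorem ae_eq_indicator_of_ae_eq_zero_or_one (hX : ∀ᵐ ω ∂μ, X ω = 0 ∨ X ω = 1) :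
    X =ᵐ[μ] {ω | X ω = 1}.indicator 1 := by
  filter_upwards [hX] with ω hω
  rcases hω with h0 | h1
  · simp [h0]
  · simp [h1]

theorem integrable_of_ae_eq_zero_or_one [IsFiniteMeasure μ] (hXm : Measurable X)
    (hX : ∀ᵐ ω ∂μ, X ω = 0 ∨ X ω = 1) : Integrable X μ :=
  ((integrable_const 1).indicator (hXm (measurableSet_singleton 1))).congr
    (ae_eq_indicator_of_ae_eq_zero_or_one hX).symm

theorem integral_of_ae_eq_zero_or_one (hXm : Measurable X) (hX : ∀ᵐ ω ∂μ, X ω = 0 ∨ X ω = 1) :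
    ∫ ω, X ω ∂μ = μ.real {ω | X ω = 1} := by
  have hA : MeasurableSet {ω | X ω = 1} := hXm (measurableSet_singleton 1)
  rw [integral_congr_ae (ae_eq_indicator_of_ae_eq_zero_or_one hX), Pi.one_def,
    integral_indicator_const _ hA, smul_eq_mul, mul_one]

end ZeroOne

section Symmetrizer

variable {Ω : Type*} [MeasurableSpace Ω] {μ : Measure Ω} {X Y : Ω → ℝ}

theorem integral_sin_pi_mul_eq_zero_of_map_add_eq_map_neg [IsProbabilityMeasure μ]
    (hXm : Measurable X) (hYm : Measurable Y) (hX : ∀ᵐ ω ∂μ, X ω = 0 ∨ X ω = 1)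
    (hEX : ∫ ω, X ω ∂μ ≠ 1 / 2) (hindep : IndepFun X Y μ)
    (hsymm : μ.map (fun ω => X ω + Y ω) = μ.map (fun ω => -(X ω + Y ω))) :
    ∫ ω, sin (π * Y ω) ∂μ = 0 := by
  have hsin_meas : Measurable fun y => sin (π * y) := by fun_prop
  have hsin_sum : ∫ ω, sin (π * (X ω + Y ω)) ∂μ = 0 :=
    integral_comp_eq_zero_of_map_eq_map_neg (hXm.add hYm).aemeasurable hsymm
      hsin_meas.stronglyMeasurable fun z => by rw [mul_neg, sin_neg]
  have hsplit : (fun ω => sin (π * (X ω + Y ω))) =ᵐ[μ] fun ω => (1 - 2 * X ω) * sin (π * Y ω) := by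
    filter_upwards [hX] with ω hω
    rcases hω with h0 | h1
    · simp [h0]
    · rw [h1, mul_add, mul_one, add_comm, sin_add_pi]
      ring
  have hEX' : ∫ ω, (1 - 2 * X ω) ∂μ = 1 - 2 * ∫ ω, X ω ∂μ := by
    rw [integral_sub (integrable_const 1)
      ((integrable_of_ae_eq_zero_or_one hXm hX).const_mul 2), integral_const_mul]
    simp
  have hfactor : ∫ ω, (1 - 2 * X ω) * sin (π * Y ω) ∂μ
      = (1 - 2 * ∫ ω, X ω ∂μ) * ∫ ω, sin (π * Y ω) ∂μ := by
    rw [← hEX']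
    have haff_meas : Measurable fun x : ℝ => 1 - 2 * x := by fun_prop
    exact (hindep.comp haff_meas hsin_meas).integral_fun_mul_eq_mul_integral
      (haff_meas.comp hXm).aestronglyMeasurable (hsin_meas.comp hYm).aestronglyMeasurable
  rw [integral_congr_ae hsplit, hfactor] at hsin_sum
  exact (mul_eq_zero.1 hsin_sum).resolve_left fun h => hEX (by linarith)

theorem neg_integral_le_integral_sq_of_integral_sin_pi_mul_eq_zero [IsFiniteMeasure μ]
    (hY : MemLp Y 2 μ) (hsin : ∫ ω, sin (π * Y ω) ∂μ = 0) :
    -∫ ω, Y ω ∂μ ≤ ∫ ω, Y ω ^ 2 ∂μ := by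
  have hYint : Integrable Y μ := hY.integrable one_le_two
  have hsin_int : Integrable (fun ω => sin (π * Y ω)) μ :=
    Integrable.of_bound (by fun_prop (disch := exact hY.1.aemeasurable)) 1
      (ae_of_all _ fun ω => by simpa using abs_sin_le_one (π * Y ω))
  have h : ∫ ω, sin (π * Y ω) ∂μ ≤ ∫ ω, π * (Y ω ^ 2 + Y ω) ∂μ :=
    integral_mono hsin_int ((hY.integrable_sq.add hYint).const_mul π) fun ω => sin_pi_mul_le (Y ω)
  rw [hsin, integral_const_mul, integral_add hY.integrable_sq hYint] at h
  nlinarith [pi_pos]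

end Symmetrizer

theorem bernoulli_symmetrizer_second_moment_bound
    {Ω : Type*} [MeasurableSpace Ω] (μ : Measure Ω) [IsProbabilityMeasure μ]
    (X Y : Ω → ℝ) (hXm : Measurable X) (hYm : Measurable Y)
    (p : ℝ) (hp : p ∈ Set.Icc (0 : ℝ) 1) (hp' : p ≠ 1 / 2)
    (hX1 : μ {ω | X ω = 1} = ENNReal.ofReal p)
    (hX0 : μ {ω | X ω = 0} = ENNReal.ofReal (1 - p))
    (hindep : IndepFun X Y μ)
    (hY2 : MemLp Y 2 μ)
    (hsymm : Measure.map (fun ω => X ω + Y ω) μ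
      = Measure.map (fun ω => -(X ω + Y ω)) μ) :
    ∫ ω, (Y ω) ^ 2 ∂μ ≥ p := by
  have hX := ae_eq_zero_or_eq_one_of_measure_eq hXm hp hX1 hX0
  have hEX : ∫ ω, X ω ∂μ = p := by
    rw [integral_of_ae_eq_zero_or_one hXm hX, measureReal_def, hX1, ENNReal.toReal_ofReal hp.1]
  have hEY : ∫ ω, Y ω ∂μ = -p := by
    have hsum : ∫ ω, (X ω + Y ω) ∂μ = 0 :=
      integral_comp_eq_zero_of_map_eq_map_neg (f := id) (hXm.add hYm).aemeasurable hsymm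
        stronglyMeasurable_id fun _ => rfl
    rw [integral_add (integrable_of_ae_eq_zero_or_one hXm hX) (hY2.integrable one_le_two),
      hEX] at hsum
    linarith
  have hsin := integral_sin_pi_mul_eq_zero_of_map_add_eq_map_neg hXm hYm hX (hEX ▸ hp')
    hindep hsymm
  linarith [neg_integral_le_integral_sq_of_integral_sin_pi_mul_eq_zero hY2 hsin]
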